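/- arXiv:2402.16778 — 2 statements merged into one kernel-verified Lean document; each statement's English description precedes it below -/
import Mathlib

section
/- If a hypothesis class H ⊆ {0,1}^X admits no distinguishing tuple, then either |H| ≤ 1, or |H| = 2 and the two functions f_0, f_1 ∈ H satisfy f_1(x) = 1 - f_0(x) for all x ∈ X. -/
/-- `(f₀, f₁, x_eq, x_dif)` is a distinguishing tuple for `H`. -/
def DistinguishingTuple {X : Type*} (H : Set (X → Bool))
    (f₀ f₁ : X → Bool) (xeq xdif : X) : Prop :=
  f₀ ∈ H ∧ f₁ ∈ H ∧ f₀ xeq = f₁ xeq ∧ f₀ xeq = f₀ xdif ∧ f₀ xdif ≠ f₁ xdif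

/-- If `H` admits no distinguishing tuple, then either `|H| ≤ 1`, or `H` consists of
exactly two functions that are pointwise complements of each other. -/
theorem no_distinguishing_tuple {X : Type*} (H : Set (X → Bool))
    (h : ∀ f₀ f₁ xeq xdif, ¬ DistinguishingTuple H f₀ f₁ xeq xdif) :
    H.Subsingleton ∨
      ∃ f₀ f₁, H = {f₀, f₁} ∧ f₀ ≠ f₁ ∧ ∀ x, f₁ x = !(f₀ x) := by
  have key : ∀ f₀ ∈ H, ∀ f₁ ∈ H, f₀ ≠ f₁ → ∀ x, f₁ x = !(f₀ x) := by
    intro f₀ h₀ f₁ h₁ hne x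
    by_contra hx
    have hx' : f₀ x = f₁ x := by
      cases hb0 : f₀ x <;> cases hb1 : f₁ x <;> simp_all
    obtain ⟨y, hy⟩ : ∃ y, f₀ y ≠ f₁ y := by
      by_contra hall
      push_neg at hall
      exact hne (funext hall)
    by_cases hxy : f₀ x = f₀ y
    · refine h f₀ f₁ x y ⟨h₀, h₁, hx', hxy, ?_⟩
      cases hb0 : f₀ y <;> cases hb1 : f₁ y <;> simp_all
    · refine h f₁ f₀ x y ⟨h₁, h₀, hx'.symm, ?_, fun e => hy e.symm⟩
      cases hb0 : f₀ x <;> cases hb1 : f₀ y <;> cases hb2 : f₁ y <;> simp_all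
  by_cases hs : H.Subsingleton
  · exact Or.inl hs
  · right
    rw [Set.not_subsingleton_iff] at hs
    obtain ⟨f₀, h₀, f₁, h₁, hne⟩ := hs
    refine ⟨f₀, f₁, ?_, hne, key f₀ h₀ f₁ h₁ hne⟩
    ext g
    constructor
    · intro hg
      by_cases hg0 : g = f₀
      · exact Or.inl hg0
      · refine Or.inr (funext fun x => ?_)
        rw [key f₀ h₀ g hg (Ne.symm hg0) x, key f₀ h₀ f₁ h₁ hne x]
    · rintro (rfl | rfl) <;> assumption
end

section
/- DP-SOA for Point_N, and more generally any online learner of Point_N whose output predictors always lie in Point^K_N, is β-concentrated whenever N ≥ 3KT²/β. -/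
/-!
Feed the learner the dummy sequence that labels the point `1` negatively. Almost surely each of
its `T` predictors is positive on at most `K` points, so in expectation at most `K * T` points are
labelled positively by some predictor. Averaging over the `N - 2` points other than `0` and `1`,
some point `x` is labelled positively with probability at most `K * T / (N - 2) ≤ β`; take `f₀`
the point function at `0`, `f₁` the one at `x`, `x_eq = 1` and `x_dif = x`.
-/

open MeasureTheory

/-- The point class on `Fin N`. -/
def PointClass (N : ℕ) : Set (Fin N → Bool) :=
  {f | ∃ i : Fin N, f = fun x => decide (x = i)}

open Finset
open scoped ENNReal

theorem sum_measure_le_of_ae_card_le {Ω ι : Type*} [MeasurableSpace Ω] {μ : Measure Ω}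
    {s : Finset ι} {E : ι → Set Ω} [∀ i ω, Decidable (ω ∈ E i)]
    (hE : ∀ i ∈ s, MeasurableSet (E i)) {M : ℕ} (h : ∀ᵐ ω ∂μ, #{i ∈ s | ω ∈ E i} ≤ M) :
    ∑ i ∈ s, μ (E i) ≤ M * μ Set.univ :=
  calc ∑ i ∈ s, μ (E i) = ∫⁻ ω, ∑ i ∈ s, (E i).indicator 1 ω ∂μ := by
        rw [lintegral_finsetSum _ fun i hi => measurable_one.indicator (hE i hi)]
        exact sum_congr rfl fun i hi => (lintegral_indicator_one (hE i hi)).symm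
    _ = ∫⁻ ω, (#{i ∈ s | ω ∈ E i} : ℝ≥0∞) ∂μ := by
        simp only [Set.indicator_apply, Pi.one_apply, sum_boole]
    _ ≤ ∫⁻ _, (M : ℝ≥0∞) ∂μ := lintegral_mono_ae (h.mono fun ω hω => by exact_mod_cast hω)
    _ = M * μ Set.univ := lintegral_const _

theorem card_filter_exists_le {ι α : Type*} [Fintype ι] [Fintype α] (g : ι → α → Bool) {K : ℕ}
    (hg : ∀ t, #{x | g t x = true} ≤ K) : #{x | ∃ t, g t x = true} ≤ Fintype.card ι * K := by
  classical
  calc #{x | ∃ t, g t x = true} ≤ #(univ.biUnion fun t => {x | g t x = true}) :=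
        card_le_card fun x => by simp
    _ ≤ ∑ t, #{x | g t x = true} := card_biUnion_le
    _ ≤ ∑ _t : ι, K := sum_le_sum fun t _ => hg t
    _ = Fintype.card ι * K := by simp

theorem exists_card_mul_measure_exists_le {ι α : Type*} [Fintype ι] [Fintype α]
    {μ : Measure (ι → α → Bool)} {K : ℕ} (hK : ∀ᵐ g ∂μ, ∀ t, #{x | g t x = true} ≤ K)
    {s : Finset α} (hs : s.Nonempty) :
    ∃ x ∈ s, #s * μ {g | ∃ t, g t x = true} ≤ Fintype.card ι * K * μ Set.univ := by
  obtain ⟨x, hx, hmin⟩ := s.exists_min_image (fun x => μ {g | ∃ t, g t x = true}) hs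
  refine ⟨x, hx, ?_⟩
  have hcount : ∀ᵐ g ∂μ, #{x ∈ s | ∃ t, g t x = true} ≤ Fintype.card ι * K :=
    hK.mono fun g hg => (card_le_card (filter_subset_filter _ (subset_univ s))).trans
      (card_filter_exists_le g hg)
  have hsum := sum_measure_le_of_ae_card_le
    (E := fun x => {g : ι → α → Bool | ∃ t, g t x = true}) (fun _ _ => .of_discrete) hcount
  rw [← nsmul_eq_mul]
  exact_mod_cast (s.card_nsmul_le_sum _ _ hmin).trans hsum

theorem exists_one_sub_div_le_measureReal_forall_eq_false {ι α : Type*} [Fintype ι] [Fintype α]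
    {μ : Measure (ι → α → Bool)} [IsProbabilityMeasure μ] {K : ℕ}
    (hK : μ {g | ∀ t, #{x | g t x = true} ≤ K} = 1) {s : Finset α} (hs : s.Nonempty) :
    ∃ x ∈ s, 1 - Fintype.card ι * K / #s ≤ μ.real {g | ∀ t, g t x = false} := by
  obtain ⟨x, hx, hmass⟩ := exists_card_mul_measure_exists_le
    ((ae_iff_measure_eq MeasurableSet.of_discrete.nullMeasurableSet).2
      (hK.trans measure_univ.symm)) hs
  refine ⟨x, hx, ?_⟩
  rw [measure_univ, mul_one] at hmass
  have hreal : #s * μ.real {g | ∃ t, g t x = true} ≤ Fintype.card ι * K := by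
    simpa only [ENNReal.toReal_mul, ENNReal.toReal_natCast, ← measureReal_def] using
      ENNReal.toReal_mono (by simp [ENNReal.mul_eq_top]) hmass
  have hcompl : {g : ι → α → Bool | ∀ t, g t x = false} = {g | ∃ t, g t x = true}ᶜ := by
    ext; simp
  rw [hcompl, probReal_compl_eq_one_sub .of_discrete, sub_le_sub_iff_left,
    le_div_iff₀' (by exact_mod_cast hs.card_pos)]
  exact hreal

/-- Any online learner of `Point_N` (in particular DP-SOA) whose output predictors
always lie in `Point^K_N` is β-concentrated whenever `N ≥ 3KT²/β`. -/
theorem multipoint_learner_concentrated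
    (T K N : ℕ) (β : ℝ) (hβ : 0 < β) (hβ1 : β ≤ 1)
    (hT : 1 ≤ T) (hK : 1 ≤ K)
    (hN : (3 * K * T ^ 2 : ℝ) / β ≤ (N : ℝ))
    (A : (Fin T → Fin N × Bool) → Measure (Fin T → (Fin N → Bool)))
    (hprob : ∀ τ, IsProbabilityMeasure (A τ))
    -- all output predictors lie in `Point^K_N` almost surely
    (hout : ∀ τ, (A τ) {g | ∀ t,
        (Finset.univ.filter (fun x => g t x = true)).card ≤ K} = 1) :
    ∃ f₀ f₁ : Fin N → Bool, ∃ xeq xdif : Fin N,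
      f₀ ∈ PointClass N ∧ f₁ ∈ PointClass N ∧
      f₀ xeq = f₁ xeq ∧ f₀ xeq = f₀ xdif ∧ f₀ xdif ≠ f₁ xdif ∧
      1 - β ≤ ((A fun _ => (xeq, f₀ xeq)) {g | ∀ t, g t xdif = f₀ xdif}).toReal := by
  have hTK : (1 : ℝ) ≤ T * K := by exact_mod_cast Nat.mul_le_mul hT hK
  have hTK_le : (T : ℝ) * K ≤ (N - 2) * β := by
    have hT' : (1 : ℝ) ≤ T := by exact_mod_cast hT
    rw [div_le_iff₀ hβ] at hN
    nlinarith
  have hN2 : (2 : ℝ) < N := by nlinarith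
  have hN3 : 3 ≤ N := by exact_mod_cast hN2
  set z₀ : Fin N := ⟨0, by omega⟩
  set z₁ : Fin N := ⟨1, by omega⟩
  have hz : z₁ ≠ z₀ := by simp [z₀, z₁, Fin.ext_iff]
  have := hprob fun _ => (z₁, false)
  obtain ⟨x₀, hx₀, hconc⟩ := exists_one_sub_div_le_measureReal_forall_eq_false
    (hout fun _ => (z₁, false)) (s := univ \ {z₀, z₁})
    ⟨⟨2, by omega⟩, by simp [z₀, z₁, Fin.ext_iff]⟩
  have hx₀' : x₀ ≠ z₀ ∧ x₀ ≠ z₁ := by simpa [not_or] using hx₀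
  have hcard : (#(univ \ {z₀, z₁}) : ℝ) = N - 2 := by
    rw [card_sdiff_of_subset (subset_univ _), card_univ, Fintype.card_fin, card_pair hz.symm,
      Nat.cast_sub (by omega)]
    norm_num
  refine ⟨fun x => decide (x = z₀), fun x => decide (x = x₀), z₁, x₀, ⟨z₀, rfl⟩, ⟨x₀, rfl⟩,
    by simp [hz, hx₀'.2.symm], by simp [hz, hx₀'.1], by simp [hx₀'.1], ?_⟩
  simp only [hz, hx₀'.1, decide_false]
  refine le_trans ?_ hconc
  rw [hcard, Fintype.card_fin, sub_le_sub_iff_left, div_le_iff₀ (sub_pos.2 hN2)]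
  linarith
end
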